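/- Let N ≥ 1, max(0,(N-2)/(N+2)) < q < N/(N+2), and fix L ≥ 0. Then there exists a unique B > 0 satisfying B = (2 + 4/N)·c·∫_0^∞ r^{N+1} (r^4 + B r^2 + L)^{−1/(1−q)} dr, where c = (q/(1−q))^{1/(1−q)} |S^{N-1}|. -/

import Mathlib

/-!
Write `p = 1 / (1 - q)` and `F(B) = ∫₀^∞ r^(N+1) (r⁴ + B r² + L)^(-p) dr`. The condition on `q` is
exactly `(N + 2) / 4 < p < (N + 2) / 2`: for `B > 0` the integrand is at most `B^(-p) r^(N+1-2p)`,
integrable near `0`, and at most `r^(N+1-4p)`, integrable near `∞`. Hence `F` is finite, positive,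
decreasing and (by dominated convergence) continuous on `(0, ∞)`, so `B ↦ C F(B)` is a positive,
continuous, decreasing function, and such a function crosses the identity exactly once.
-/

open MeasureTheory Real

/-- Surface measure of the unit sphere `S^{N-1}` in `ℝ^N`, equal to `N` times the
volume of the unit ball. -/
noncomputable def sphereSurface (N : ℕ) : ℝ :=
  N * (volume (Metric.ball (0 : EuclideanSpace ℝ (Fin N)) 1)).toReal

open Set Filter

theorem existsUnique_pos_eq_of_antitoneOn {g : ℝ → ℝ} (hcont : ContinuousOn g (Ioi 0))
    (hanti : AntitoneOn g (Ioi 0)) (hpos : ∀ x, 0 < x → 0 < g x) :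
    ∃! x, 0 < x ∧ x = g x := by
  set lo := min 1 (g 1 / 2)
  have hlo : 0 < lo := lt_min one_pos (half_pos (hpos 1 one_pos))
  set hi := max lo (g lo + 1)
  have hlo_hi : lo ≤ hi := le_max_left _ _
  have hg_lo : lo ≤ g lo := by
    have : g 1 ≤ g lo := hanti hlo (mem_Ioi.2 one_pos) (min_le_left _ _)
    linarith [min_le_right 1 (g 1 / 2), hpos 1 one_pos]
  have hg_hi : g hi ≤ hi := by
    have : g hi ≤ g lo := hanti hlo (hlo.trans_le hlo_hi) hlo_hi
    linarith [le_max_right lo (g lo + 1)]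
  have hcont' : ContinuousOn (fun x => g x - x) (Icc lo hi) :=
    (hcont.mono fun x hx => hlo.trans_le hx.1).sub continuousOn_id
  obtain ⟨x, hx, hgx⟩ := intermediate_value_Icc' hlo_hi hcont'
    (show (0 : ℝ) ∈ Icc (g hi - hi) (g lo - lo) from ⟨by linarith, by linarith⟩)
  have hx0 : 0 < x := hlo.trans_le hx.1
  refine ⟨x, ⟨hx0, by linarith [show g x - x = 0 from hgx]⟩, ?_⟩
  rintro y ⟨hy0, hy⟩
  rcases le_total y x with h | h
  · linarith [hanti hy0 hx0 h]
  · linarith [hanti hx0 hy0 h]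

noncomputable def radialIntegrand (a p L B r : ℝ) : ℝ := r ^ a * (r ^ 4 + B * r ^ 2 + L) ^ (-p)

noncomputable def radialIntegral (a p L B : ℝ) : ℝ := ∫ r in Ioi 0, radialIntegrand a p L B r

section radialIntegrand

variable {a p L B B₁ B₂ r : ℝ}

theorem radialIntegrand_nonneg (hL : 0 ≤ L) (hB : 0 ≤ B) (hr : 0 ≤ r) :
    0 ≤ radialIntegrand a p L B r := by
  unfold radialIntegrand; positivity

theorem radialIntegrand_pos (hL : 0 ≤ L) (hB : 0 ≤ B) (hr : 0 < r) :
    0 < radialIntegrand a p L B r := by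
  unfold radialIntegrand; positivity

theorem continuousOn_radialIntegrand (hL : 0 ≤ L) (hB : 0 ≤ B) :
    ContinuousOn (radialIntegrand a p L B) (Ioi 0) := by
  refine (continuousOn_id.rpow_const fun r hr => Or.inl hr.ne').mul
    ((by fun_prop : Continuous fun r : ℝ => r ^ 4 + B * r ^ 2 + L).continuousOn.rpow_const
      fun r (hr : 0 < r) => Or.inl (by positivity))

theorem continuousAt_radialIntegrand_param (hL : 0 ≤ L) (hB : 0 ≤ B) (hr : 0 < r) :
    ContinuousAt (fun B => radialIntegrand a p L B r) B :=
  continuousAt_const.mul <| ContinuousAt.rpow_const (by fun_prop) (Or.inl (by positivity))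

theorem radialIntegrand_le_of_le (hp : 0 ≤ p) (hL : 0 ≤ L) (hB₁ : 0 ≤ B₁) (h : B₁ ≤ B₂)
    (hr : 0 < r) : radialIntegrand a p L B₂ r ≤ radialIntegrand a p L B₁ r := by
  unfold radialIntegrand
  gcongr ?_ * ?_
  exact rpow_le_rpow_of_nonpos (by positivity) (by gcongr) (neg_nonpos.2 hp)

theorem radialIntegrand_le_near_zero (hp : 0 ≤ p) (hL : 0 ≤ L) (hB : 0 < B) (hr : 0 < r) :
    radialIntegrand a p L B r ≤ B ^ (-p) * r ^ (a - 2 * p) := by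
  have hbase : (B * r ^ 2) ^ (-p) = B ^ (-p) * r ^ (-(2 * p)) := by
    rw [mul_rpow hB.le (by positivity), ← rpow_natCast r 2, ← rpow_mul hr.le]
    norm_num
  calc radialIntegrand a p L B r ≤ r ^ a * (B * r ^ 2) ^ (-p) := by
        refine mul_le_mul_of_nonneg_left ?_ (by positivity)
        exact rpow_le_rpow_of_nonpos (by positivity) (by nlinarith) (neg_nonpos.2 hp)
    _ = B ^ (-p) * r ^ (a - 2 * p) := by
        rw [hbase, mul_left_comm, ← rpow_add hr, sub_eq_add_neg]

theorem radialIntegrand_le_at_top (hp : 0 ≤ p) (hL : 0 ≤ L) (hB : 0 ≤ B) (hr : 0 < r) :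
    radialIntegrand a p L B r ≤ r ^ (a - 4 * p) := by
  have hbase : (r ^ 4) ^ (-p) = r ^ (-(4 * p)) := by
    rw [← rpow_natCast r 4, ← rpow_mul hr.le]
    norm_num
  calc radialIntegrand a p L B r ≤ r ^ a * (r ^ 4) ^ (-p) := by
        refine mul_le_mul_of_nonneg_left ?_ (by positivity)
        exact rpow_le_rpow_of_nonpos (by positivity) (by nlinarith) (neg_nonpos.2 hp)
    _ = r ^ (a - 4 * p) := by rw [hbase, ← rpow_add hr, sub_eq_add_neg]

end radialIntegrand

section radialIntegral

variable {a p L B : ℝ}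

theorem integrableOn_radialIntegrand (h₀ : -1 < a - 2 * p) (hinf : a - 4 * p < -1)
    (hL : 0 ≤ L) (hB : 0 < B) : IntegrableOn (radialIntegrand a p L B) (Ioi 0) := by
  have hp : 0 ≤ p := by linarith
  have hmeas : ∀ s ⊆ Ioi (0 : ℝ), MeasurableSet s →
      AEStronglyMeasurable (radialIntegrand a p L B) (volume.restrict s) := fun s hs hsm =>
    ((continuousOn_radialIntegrand hL hB.le).mono hs).aestronglyMeasurable hsm
  rw [← Ioc_union_Ioi_eq_Ioi zero_le_one]
  refine IntegrableOn.union ?_ ?_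
  · have hbound : IntegrableOn (fun r => B ^ (-p) * r ^ (a - 2 * p)) (Ioc 0 1) :=
      ((intervalIntegrable_iff_integrableOn_Ioc_of_le zero_le_one).mp
        (intervalIntegral.intervalIntegrable_rpow' h₀)).const_mul _
    refine hbound.mono' (hmeas _ Ioc_subset_Ioi_self measurableSet_Ioc) ?_
    filter_upwards [ae_restrict_mem measurableSet_Ioc] with r hr
    rw [norm_of_nonneg (radialIntegrand_nonneg hL hB.le hr.1.le)]
    exact radialIntegrand_le_near_zero hp hL hB hr.1
  · refine (integrableOn_Ioi_rpow_of_lt hinf one_pos).mono'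
      (hmeas _ (Ioi_subset_Ioi zero_le_one) measurableSet_Ioi) ?_
    filter_upwards [ae_restrict_mem measurableSet_Ioi] with r (hr : 1 < r)
    rw [norm_of_nonneg (radialIntegrand_nonneg hL hB.le (by linarith))]
    exact radialIntegrand_le_at_top hp hL hB.le (by linarith)

theorem radialIntegral_pos (h₀ : -1 < a - 2 * p) (hinf : a - 4 * p < -1)
    (hL : 0 ≤ L) (hB : 0 < B) : 0 < radialIntegral a p L B := by
  have hsupp : Ioi 0 ⊆ Function.support (radialIntegrand a p L B) := fun r hr =>
    (radialIntegrand_pos hL hB.le hr).ne'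
  rw [radialIntegral, setIntegral_pos_iff_support_of_nonneg_ae ?_
    (integrableOn_radialIntegrand h₀ hinf hL hB), inter_eq_self_of_subset_right hsupp]
  · simp
  · filter_upwards [ae_restrict_mem measurableSet_Ioi] with r hr
    exact radialIntegrand_nonneg hL hB.le (le_of_lt hr)

theorem antitoneOn_radialIntegral (h₀ : -1 < a - 2 * p) (hinf : a - 4 * p < -1)
    (hL : 0 ≤ L) : AntitoneOn (radialIntegral a p L) (Ioi 0) := fun B₁ hB₁ B₂ hB₂ h =>
  setIntegral_mono_on (integrableOn_radialIntegrand h₀ hinf hL hB₂)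
    (integrableOn_radialIntegrand h₀ hinf hL hB₁) measurableSet_Ioi fun _ hr =>
    radialIntegrand_le_of_le (by linarith) hL (le_of_lt hB₁) h hr

theorem continuousOn_radialIntegral (h₀ : -1 < a - 2 * p) (hinf : a - 4 * p < -1)
    (hL : 0 ≤ L) : ContinuousOn (radialIntegral a p L) (Ioi 0) := by
  intro B₀ (hB₀ : 0 < B₀)
  -- for `B` near `B₀` the integrand is dominated by the one at `B₀ / 2`
  have hnear : ∀ᶠ B in nhds B₀, B₀ / 2 < B := eventually_gt_nhds (half_lt_self hB₀)
  refine (continuousAt_of_dominated (bound := radialIntegrand a p L (B₀ / 2)) ?_ ?_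
    (integrableOn_radialIntegrand h₀ hinf hL (half_pos hB₀)) ?_).continuousWithinAt
  · filter_upwards [hnear] with B hB
    exact (continuousOn_radialIntegrand hL (by linarith)).aestronglyMeasurable measurableSet_Ioi
  · filter_upwards [hnear] with B hB
    filter_upwards [ae_restrict_mem measurableSet_Ioi] with r (hr : 0 < r)
    rw [norm_of_nonneg (radialIntegrand_nonneg hL (by linarith) hr.le)]
    exact radialIntegrand_le_of_le (by linarith) hL (by linarith) hB.le hr
  · filter_upwards [ae_restrict_mem measurableSet_Ioi] with r (hr : 0 < r)
    exact continuousAt_radialIntegrand_param hL hB₀.le hr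

end radialIntegral

theorem one_div_one_sub_mem_Ioo {n q : ℝ} (hn : 0 < n + 2) (hq₁ : (n - 2) / (n + 2) < q)
    (hq₂ : q < n / (n + 2)) : 1 / (1 - q) ∈ Ioo ((n + 2) / 4) ((n + 2) / 2) := by
  rw [div_lt_iff₀ hn] at hq₁
  rw [lt_div_iff₀ hn] at hq₂
  have h1q : 0 < 1 - q := by nlinarith
  constructor
  · rw [div_lt_div_iff₀ (by norm_num) h1q]; nlinarith
  · rw [div_lt_div_iff₀ h1q two_pos]; nlinarith

theorem sphereSurface_pos {N : ℕ} (hN : 1 ≤ N) : 0 < sphereSurface N :=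
  mul_pos (by exact_mod_cast hN)
    (ENNReal.toReal_pos (Metric.measure_ball_pos volume _ one_pos).ne' measure_ball_lt_top.ne)

theorem stmt_8 (N : ℕ) (hN : 1 ≤ N) (q : ℝ)
    (hq1 : max 0 (((N : ℝ) - 2) / (N + 2)) < q) (hq2 : q < (N : ℝ) / (N + 2))
    (L : ℝ) (hL : 0 ≤ L) :
    ∃! B : ℝ, 0 < B ∧
      B = (2 + 4 / N) * (q / (1 - q)) ^ (1 / (1 - q)) * sphereSurface N *
        ∫ r in Set.Ioi (0 : ℝ),
          r ^ ((N : ℝ) + 1) * (r ^ 4 + B * r ^ 2 + L) ^ (-(1 / (1 - q))) := by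
  obtain ⟨hq0, hqN⟩ := max_lt_iff.1 hq1
  have hN2 : (0 : ℝ) < N + 2 := by positivity
  have hq_lt_one : q < 1 := hq2.trans ((div_lt_one hN2).2 (by linarith))
  obtain ⟨hp₁, hp₂⟩ := one_div_one_sub_mem_Ioo hN2 hqN hq2
  have h₀ : -1 < (N + 1 : ℝ) - 2 * (1 / (1 - q)) := by linarith
  have hinf : (N + 1 : ℝ) - 4 * (1 / (1 - q)) < -1 := by linarith
  set C := (2 + 4 / N) * (q / (1 - q)) ^ (1 / (1 - q)) * sphereSurface N
  have hC : 0 < C := mul_pos (mul_pos (by positivity)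
    (rpow_pos_of_pos (div_pos hq0 (sub_pos.2 hq_lt_one)) _)) (sphereSurface_pos hN)
  exact existsUnique_pos_eq_of_antitoneOn
    ((continuousOn_radialIntegral h₀ hinf hL).const_smul C)
    (fun B₁ hB₁ B₂ hB₂ h => mul_le_mul_of_nonneg_left
      (antitoneOn_radialIntegral h₀ hinf hL hB₁ hB₂ h) hC.le)
    (fun B hB => mul_pos hC (radialIntegral_pos h₀ hinf hL hB))
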